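/- Let n ≥ 2 be an integer, K a field, and R_n the rose graph with n petals. For every p ∈ A_{R_n}(e_1, e_2) ∩ L_K(R_n)_0, the K-algebra homomorphism θ_p : L_K(R_n) → L_K(R_n)^{φ_{U_p}} defined by θ_p(v) = v, θ_p(e_i) = e_i for all 1 ≤ i ≤ n, θ_p(e_j*) = e_j* for all 2 ≤ j ≤ n, and θ_p(e_1*) = e_1* + p e_2*, is an isomorphism. -/

import Mathlib

/-- Generators of the Leavitt path algebra of the rose with `n` petals:
the edges `e_1, …, e_n` and the ghost edges `e_1*, …, e_n*` (the single vertex `v` is the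
identity `1`). -/
inductive RGen (n : ℕ) : Type
  | e : Fin n → RGen n
  | g : Fin n → RGen n

/-- The defining relations of `L_K(R_n)`: `e_i* e_j = δ_{ij} v` and `Σ_i e_i e_i* = v`,
where `v = 1`. -/
inductive RoseRel (K : Type) [Field K] (n : ℕ) :
    FreeAlgebra K (RGen n) → FreeAlgebra K (RGen n) → Prop
  | ghostEdgeSame (i : Fin n) :
      RoseRel K n (FreeAlgebra.ι K (RGen.g i) * FreeAlgebra.ι K (RGen.e i)) 1
  | ghostEdgeNe (i j : Fin n) (h : i ≠ j) :
      RoseRel K n (FreeAlgebra.ι K (RGen.g i) * FreeAlgebra.ι K (RGen.e j)) 0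
  | ck2 :
      RoseRel K n (∑ i : Fin n, FreeAlgebra.ι K (RGen.e i) * FreeAlgebra.ι K (RGen.g i)) 1

/-- The Leavitt path algebra `L_K(R_n)` of the rose with `n` petals. -/
abbrev LRose (K : Type) [Field K] (n : ℕ) : Type := RingQuot (RoseRel K n)

/-- The edge `e_i` as an element of `L_K(R_n)`. -/
noncomputable def ee (K : Type) [Field K] (n : ℕ) (i : Fin n) : LRose K n :=
  RingQuot.mkAlgHom K (RoseRel K n) (FreeAlgebra.ι K (RGen.e i))

/-- The ghost edge `e_i*` as an element of `L_K(R_n)`. -/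
noncomputable def gg (K : Type) [Field K] (n : ℕ) (i : Fin n) : LRose K n :=
  RingQuot.mkAlgHom K (RoseRel K n) (FreeAlgebra.ι K (RGen.g i))

/-- The degree `d` component of the ℤ-grading of `L_K(R_n)`: the `K`-span of the
elements `p q*` with `|p| - |q| = d`. -/
noncomputable def rComponent (K : Type) [Field K] (n : ℕ) (d : ℤ) :
    Submodule K (LRose K n) :=
  Submodule.span K {x : LRose K n | ∃ p q : List (Fin n),
    (p.length : ℤ) - (q.length : ℤ) = d ∧
    x = (p.map (ee K n)).prod * (q.reverse.map (gg K n)).prod}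

/-- A map is graded when it preserves every homogeneous component. -/
def RGraded (K : Type) [Field K] (n : ℕ) (f : LRose K n → LRose K n) : Prop :=
  ∀ d : ℤ, ∀ x ∈ rComponent K n d, f x ∈ rComponent K n d

/-- The defining property of the endomorphism `φ_P` of `L_K(R_n)` attached to a matrix
`P` with inverse `P'`: it sends `e_i ↦ Σ_k e_k p_{k i}` and `e_i* ↦ Σ_k p'_{i k} e_k*`
(and `v = 1 ↦ 1` automatically). -/
def RPhiProps (K : Type) [Field K] (n : ℕ) (P P' : Matrix (Fin n) (Fin n) (LRose K n))
    (φ : LRose K n →ₐ[K] LRose K n) : Prop :=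
  (∀ i, φ (ee K n i) = ∑ k, ee K n k * P k i) ∧
  (∀ i, φ (gg K n i) = ∑ k, P' i k * gg K n k)

/-- The subalgebra `A_{R_n}(e_1, e_2)` of `L_K(R_n)`, generated by
`v (= 1), e_1, e_3, …, e_n, e_2*, …, e_n*` (with `0`-based indices: all `e_i` with
`i ≠ 1` and all `e_j*` with `j ≠ 0`). -/
noncomputable def roseA (K : Type) [Field K] (n : ℕ) : Subalgebra K (LRose K n) :=
  Algebra.adjoin K
    {x : LRose K n | (∃ i : Fin n, (i : ℕ) ≠ 1 ∧ x = ee K n i) ∨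
      (∃ j : Fin n, (j : ℕ) ≠ 0 ∧ x = gg K n j)}
/-! Write `θ a = ρ_φ(a)(1)`, where `ρ_σ : L → End L` is the representation
`e_i ↦ e_i · σ(-)`, `e_j* ↦ σ⁻¹(e_j* · -)`: for `a` of degree `m`, `ρ_σ(a)` is left multiplication
by `θ a` in the Zhang twist, `y ↦ θ(a) σ^m(y)`.

For `σ = φ_{U_p}`, the representation `ρ_{σ⁻¹}` is `σ`-equivariant,
`ρ_{σ⁻¹}(σ z) = σ ∘ ρ_{σ⁻¹}(z) ∘ σ⁻¹`; on generators this reduces to `ρ_{σ⁻¹}(p)` being left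
multiplication by `p`, which holds because `p` is a degree-zero combination of `σ`-fixed words.
Equivariance gives `ψ(ρ_σ(x) y) = x ψ(y)` for `ψ = ρ_{σ⁻¹}(-)(1)`, so `ψ ∘ θ = id`. Since
`σ⁻¹ = φ_{U_{-p}}`, exchanging the roles of `σ` and `σ⁻¹` gives `θ ∘ ψ = id`. -/

namespace LRose

variable {K : Type} [Field K] {n : ℕ}

theorem gg_mul_ee (i j : Fin n) : gg K n i * ee K n j = if i = j then 1 else 0 := by
  split_ifs with h
  · subst h
    simpa [gg, ee] using RingQuot.mkAlgHom_rel K (RoseRel.ghostEdgeSame (K := K) i)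
  · simpa [gg, ee] using RingQuot.mkAlgHom_rel K (RoseRel.ghostEdgeNe (K := K) i j h)

theorem sum_ee_mul_gg : ∑ i, ee K n i * gg K n i = 1 := by
  simpa [gg, ee] using RingQuot.mkAlgHom_rel K (RoseRel.ck2 (K := K) (n := n))

section Lift

variable {A : Type*} [Semiring A] [Algebra K A]

noncomputable def lift (x y : Fin n → A) (hyx : ∀ i j, y i * x j = if i = j then 1 else 0)
    (hxy : ∑ i, x i * y i = 1) : LRose K n →ₐ[K] A :=
  RingQuot.liftAlgHom K ⟨FreeAlgebra.lift K (fun | .e i => x i | .g j => y j), by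
    rintro _ _ (i | ⟨i, j, h⟩ | _)
    · simpa using hyx i i
    · simpa [h] using hyx i j
    · simpa using hxy⟩

variable {x y : Fin n → A} {hyx : ∀ i j, y i * x j = if i = j then 1 else 0}
  {hxy : ∑ i, x i * y i = 1}

@[simp]
theorem lift_ee (i : Fin n) : lift x y hyx hxy (ee K n i) = x i := by
  simp [lift, ee]

@[simp]
theorem lift_gg (j : Fin n) : lift x y hyx hxy (gg K n j) = y j := by
  simp [lift, gg]

theorem algHom_ext {f g : LRose K n →ₐ[K] A} (he : ∀ i, f (ee K n i) = g (ee K n i))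
    (hg : ∀ j, f (gg K n j) = g (gg K n j)) : f = g :=
  RingQuot.ringQuot_ext' K f g <| FreeAlgebra.hom_ext <| funext fun
    | RGen.e i => he i
    | RGen.g j => hg j

end Lift

@[elab_as_elim]
theorem induction {motive : LRose K n → Prop}
    (algebraMap : ∀ r, motive (algebraMap K (LRose K n) r))
    (ee : ∀ i, motive (ee K n i)) (gg : ∀ j, motive (gg K n j))
    (add : ∀ a b, motive a → motive b → motive (a + b))
    (mul : ∀ a b, motive a → motive b → motive (a * b)) (a : LRose K n) : motive a := by
  obtain ⟨a, rfl⟩ := RingQuot.mkAlgHom_surjective K (RoseRel K n) a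
  induction a using FreeAlgebra.induction with
  | grade0 r => simpa using algebraMap r
  | grade1 x => cases x; exacts [ee _, gg _]
  | mul a b ha hb => simpa using mul _ _ ha hb
  | add a b ha hb => simpa using add _ _ ha hb

section Words

def letterDeg : RGen n → ℤ
  | .e _ => 1
  | .g _ => -1

def wordDeg (l : List (RGen n)) : ℤ := (l.map letterDeg).sum

variable (K) in
noncomputable def letter : RGen n → LRose K n
  | .e i => ee K n i
  | .g j => gg K n j

variable (K) in
noncomputable def word (l : List (RGen n)) : LRose K n := (l.map (letter K)).prod

@[simp]
theorem word_nil : word K ([] : List (RGen n)) = 1 := rfl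

@[simp]
theorem word_cons (x : RGen n) (l : List (RGen n)) :
    word K (x :: l) = letter K x * word K l := by
  simp [word]

theorem word_append (l l' : List (RGen n)) : word K (l ++ l') = word K l * word K l' := by
  simp [word]

@[simp]
theorem wordDeg_cons (x : RGen n) (l : List (RGen n)) :
    wordDeg (x :: l) = letterDeg x + wordDeg l := by
  simp [wordDeg]

theorem exists_word_of_mem_closure {F : Set (RGen n)} {y : LRose K n}
    (hy : y ∈ Submonoid.closure (letter K '' F)) :
    ∃ l : List (RGen n), (∀ x ∈ l, x ∈ F) ∧ word K l = y := by
  induction hy using Submonoid.closure_induction with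
  | mem y hy =>
    obtain ⟨x, hx, rfl⟩ := hy
    exact ⟨[x], by simpa, by simp⟩
  | one => exact ⟨[], by simp, rfl⟩
  | mul y z _ _ hy hz =>
    obtain ⟨l, hl, rfl⟩ := hy
    obtain ⟨l', hl', rfl⟩ := hz
    exact ⟨l ++ l', fun x hx => (List.mem_append.mp hx).elim (hl x) (hl' x), word_append l l'⟩

end Words

section Grading

open AddMonoidAlgebra

variable (K n) in
noncomputable def gradingHom : LRose K n →ₐ[K] AddMonoidAlgebra (LRose K n) ℤ :=
  lift (fun i => single 1 (ee K n i)) (fun j => single (-1) (gg K n j))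
    (fun i j => by
      rw [single_mul_single, neg_add_cancel, gg_mul_ee]
      split_ifs
      exacts [rfl, single_zero 0])
    (calc ∑ i, single 1 (ee K n i) * single (-1) (gg K n i)
        _ = singleAddHom 0 (∑ i, ee K n i * gg K n i) := by
          simp_rw [single_mul_single, add_neg_cancel, map_sum]; rfl
        _ = 1 := by rw [sum_ee_mul_gg]; rfl)

theorem gradingHom_letter (x : RGen n) :
    gradingHom K n (letter K x) = single (letterDeg x) (letter K x) := by
  cases x <;> simp only [gradingHom, letter, letterDeg, lift_ee, lift_gg]

theorem gradingHom_word (l : List (RGen n)) :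
    gradingHom K n (word K l) = single (wordDeg l) (word K l) := by
  induction l with
  | nil => rw [word_nil, map_one, one_def]; rfl
  | cons x l ih =>
    rw [word_cons, map_mul, gradingHom_letter, ih, single_mul_single, wordDeg_cons]

theorem gradingHom_of_mem_rComponent {d : ℤ} {a : LRose K n} (ha : a ∈ rComponent K n d) :
    gradingHom K n a = single d a := by
  induction ha using Submodule.span_induction with
  | mem x hx =>
    obtain ⟨P, Q, rfl, rfl⟩ := hx
    have hword : (P.map (ee K n)).prod * (Q.reverse.map (gg K n)).prod =
        word K (P.map .e ++ Q.reverse.map .g) := by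
      simp [word, Function.comp_def, letter]
    rw [hword, gradingHom_word]
    congr 1
    simp [wordDeg, Function.comp_def, letterDeg, sub_eq_add_neg]
  | zero => rw [map_zero, single_zero]
  | add x y _ _ hx hy => rw [map_add, hx, hy, single_add]
  | smul c x _ hx => rw [map_smul, hx, smul_single]

theorem ee_mem_rComponent (i : Fin n) : ee K n i ∈ rComponent K n 1 :=
  Submodule.subset_span ⟨[i], [], by simp, by simp⟩

theorem gg_mem_rComponent (j : Fin n) : gg K n j ∈ rComponent K n (-1) :=
  Submodule.subset_span ⟨[], [j], by simp, by simp⟩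

variable (K) in
noncomputable def zeroDegreeSpan (F : Set (RGen n)) : Submodule K (LRose K n) :=
  Submodule.span K (word K '' {l | (∀ x ∈ l, x ∈ F) ∧ wordDeg l = 0})

theorem mem_zeroDegreeSpan {F : Set (RGen n)} {a : LRose K n}
    (hA : a ∈ Algebra.adjoin K (letter K '' F)) (h0 : a ∈ rComponent K n 0) :
    a ∈ zeroDegreeSpan K F := by
  let π : LRose K n →ₗ[K] LRose K n :=
    Finsupp.lapply 0 ∘ₗ (coeffLinearEquiv K).toLinearMap ∘ₗ (gradingHom K n).toLinearMap
  have hπ (x : LRose K n) : π x = (gradingHom K n x).coeff 0 := rfl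
  have hmap : π a ∈ (Submodule.span K (Submonoid.closure (letter K '' F) : Set _)).map π :=
    Submodule.mem_map_of_mem (by rwa [← Algebra.adjoin_eq_span])
  rw [hπ, gradingHom_of_mem_rComponent h0, coeff_single, Finsupp.single_eq_same,
    Submodule.map_span] at hmap
  refine Submodule.span_le.mpr ?_ hmap
  rintro _ ⟨y, hy, rfl⟩
  obtain ⟨l, hl, rfl⟩ := exists_word_of_mem_closure hy
  rw [SetLike.mem_coe, hπ, gradingHom_word, coeff_single, Finsupp.single_apply]
  split_ifs with hdeg
  · exact Submodule.subset_span ⟨l, ⟨hl, hdeg⟩, rfl⟩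
  · exact zero_mem _

end Grading

section TwistRep

noncomputable def twistRep (σ : LRose K n ≃ₐ[K] LRose K n) :
    LRose K n →ₐ[K] Module.End K (LRose K n) :=
  lift (fun i => LinearMap.mulLeft K (ee K n i) * σ.toLinearMap)
    (fun j => σ.symm.toLinearMap * LinearMap.mulLeft K (gg K n j))
    (fun i j => LinearMap.ext fun y => by
      change σ.symm (gg K n i * (ee K n j * σ y)) = _
      rw [← mul_assoc, gg_mul_ee]
      split_ifs <;> simp)
    (LinearMap.ext fun y => by simp [← mul_assoc, ← Finset.sum_mul, sum_ee_mul_gg])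

noncomputable def twistMap (σ : LRose K n ≃ₐ[K] LRose K n) : LRose K n →ₗ[K] LRose K n :=
  LinearMap.applyₗ 1 ∘ₗ (twistRep σ).toLinearMap

variable (σ : LRose K n ≃ₐ[K] LRose K n)

theorem twistMap_apply (a : LRose K n) : twistMap σ a = twistRep σ a 1 := rfl

@[simp]
theorem twistRep_ee_apply (i : Fin n) (y : LRose K n) :
    twistRep σ (ee K n i) y = ee K n i * σ y := by
  simp [twistRep]

@[simp]
theorem twistRep_gg_apply (j : Fin n) (y : LRose K n) :
    twistRep σ (gg K n j) y = σ.symm (gg K n j * y) := by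
  simp [twistRep]

theorem eq_twistMap {θ : LRose K n →ₗ[K] LRose K n} (hone : θ 1 = 1)
    (hee : ∀ i b, θ (ee K n i * b) = ee K n i * σ (θ b))
    (hgg : ∀ j b, θ (gg K n j * b) = σ.symm (gg K n j * θ b)) (a : LRose K n) :
    θ a = twistMap σ a := by
  suffices ∀ b, θ (a * b) = twistRep σ a (θ b) by simpa [hone, twistMap_apply] using this 1
  induction a using LRose.induction with
  | algebraMap r => simp [Algebra.algebraMap_eq_smul_one]
  | ee i => simpa using hee i
  | gg j => simpa using hgg j
  | add a a' ha ha' => simp [add_mul, ha, ha']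
  | mul a a' ha ha' => simp [mul_assoc, ha, ha']

end TwistRep

section FixedWords

variable {F : Set (RGen n)} {τ : LRose K n ≃ₐ[K] LRose K n}

theorem apply_word (hτ : ∀ x ∈ F, τ (letter K x) = letter K x) {l : List (RGen n)}
    (hl : ∀ x ∈ l, x ∈ F) : τ (word K l) = word K l := by
  induction l with
  | nil => simp
  | cons x l ih =>
    rw [List.forall_mem_cons] at hl
    rw [word_cons, map_mul, hτ x hl.1, ih hl.2]

theorem twistRep_word_apply (hτ : ∀ x ∈ F, τ (letter K x) = letter K x) {l : List (RGen n)}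
    (hl : ∀ x ∈ l, x ∈ F) (y : LRose K n) :
    twistRep τ (word K l) y = word K l * (τ ^ wordDeg l) y := by
  induction l with
  | nil => simp [wordDeg]
  | cons x l ih =>
    rw [List.forall_mem_cons] at hl
    have hword : τ.symm (word K l) = word K l := τ.symm_apply_eq.mpr (apply_word hτ hl.2).symm
    rw [word_cons, map_mul, Module.End.mul_apply, ih hl.2, wordDeg_cons, mul_assoc]
    cases x with
    | e i => simp [letter, letterDeg, apply_word hτ hl.2, zpow_one_add]
    | g j =>
      have hj : τ.symm (gg K n j) = gg K n j := τ.symm_apply_eq.mpr (hτ _ hl.1).symm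
      simp [letter, letterDeg, hj, hword, zpow_add, AlgEquiv.aut_inv]

theorem twistRep_apply_of_mem_zeroDegreeSpan (hτ : ∀ x ∈ F, τ (letter K x) = letter K x)
    {p : LRose K n} (hp : p ∈ zeroDegreeSpan K F) (y : LRose K n) :
    twistRep τ p y = p * y := by
  induction hp using Submodule.span_induction with
  | mem x hx =>
    obtain ⟨l, ⟨hl, hdeg⟩, rfl⟩ := hx
    rw [twistRep_word_apply hτ hl, hdeg, zpow_zero]
    rfl
  | zero => simp
  | add x x' _ _ hx hx' => simp [add_mul, hx, hx']
  | smul c x _ hx => simp [hx]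

theorem apply_of_mem_zeroDegreeSpan (hτ : ∀ x ∈ F, τ (letter K x) = letter K x)
    {p : LRose K n} (hp : p ∈ zeroDegreeSpan K F) : τ p = p := by
  induction hp using Submodule.span_induction with
  | mem x hx =>
    obtain ⟨l, ⟨hl, -⟩, rfl⟩ := hx
    exact apply_word hτ hl
  | zero => simp
  | add x x' _ _ hx hx' => simp [hx, hx']
  | smul c x _ hx => simp [hx]

end FixedWords

def fixedLetters (a b : Fin n) : Set (RGen n) := {x | x ≠ .e b ∧ x ≠ .g a}

theorem roseA_eq_adjoin {a b : Fin n} (ha : (a : ℕ) = 0) (hb : (b : ℕ) = 1) :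
    roseA K n = Algebra.adjoin K (letter K '' fixedLetters a b) := by
  rw [roseA]
  congr 1
  ext x
  constructor
  · rintro (⟨i, hi, rfl⟩ | ⟨j, hj, rfl⟩)
    · exact ⟨.e i, by simpa [fixedLetters, Fin.ext_iff, hb] using hi, rfl⟩
    · exact ⟨.g j, by simpa [fixedLetters, Fin.ext_iff, ha] using hj, rfl⟩
  · rintro ⟨i | j, hx, rfl⟩
    · exact Or.inl ⟨i, by simpa [fixedLetters, Fin.ext_iff, hb] using hx, rfl⟩
    · exact Or.inr ⟨j, by simpa [fixedLetters, Fin.ext_iff, ha] using hx, rfl⟩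

/-- `σ` is the automorphism `φ_{U_p}` of the elementary matrix with `p` in position `(a, b)`,
and `p` lies in `A_{R_n}(e_a, e_b) ∩ L_K(R_n)_0`. -/
structure IsElementaryTwist (a b : Fin n) (p : LRose K n) (σ : LRose K n ≃ₐ[K] LRose K n) :
    Prop where
  ne : a ≠ b
  mem_zeroDegreeSpan : p ∈ zeroDegreeSpan K (fixedLetters a b)
  apply_letter : ∀ x ∈ fixedLetters a b, σ (letter K x) = letter K x
  apply_ee : σ (ee K n b) = ee K n b + ee K n a * p
  apply_gg : σ (gg K n a) = gg K n a - p * gg K n b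

namespace IsElementaryTwist

variable {a b : Fin n} {p : LRose K n} {σ : LRose K n ≃ₐ[K] LRose K n}

theorem symm_apply_letter (h : IsElementaryTwist a b p σ) :
    ∀ x ∈ fixedLetters a b, σ.symm (letter K x) = letter K x :=
  fun x hx => σ.symm_apply_eq.mpr (h.apply_letter x hx).symm

theorem apply_ee_of_ne (h : IsElementaryTwist a b p σ) {i : Fin n} (hi : i ≠ b) :
    σ (ee K n i) = ee K n i :=
  h.apply_letter (.e i) (by simp [fixedLetters, hi])

theorem apply_gg_of_ne (h : IsElementaryTwist a b p σ) {j : Fin n} (hj : j ≠ a) :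
    σ (gg K n j) = gg K n j :=
  h.apply_letter (.g j) (by simp [fixedLetters, hj])

theorem apply_self (h : IsElementaryTwist a b p σ) : σ p = p :=
  apply_of_mem_zeroDegreeSpan h.apply_letter h.mem_zeroDegreeSpan

theorem symm_apply_self (h : IsElementaryTwist a b p σ) : σ.symm p = p :=
  apply_of_mem_zeroDegreeSpan h.symm_apply_letter h.mem_zeroDegreeSpan

theorem twistRep_symm_self_apply (h : IsElementaryTwist a b p σ) (y : LRose K n) :
    twistRep σ.symm p y = p * y :=
  twistRep_apply_of_mem_zeroDegreeSpan h.symm_apply_letter h.mem_zeroDegreeSpan y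

theorem symm (h : IsElementaryTwist a b p σ) : IsElementaryTwist a b (-p) σ.symm where
  ne := h.ne
  mem_zeroDegreeSpan := neg_mem h.mem_zeroDegreeSpan
  apply_letter := h.symm_apply_letter
  apply_ee := by
    rw [σ.symm_apply_eq, map_add, map_mul, map_neg, h.apply_ee, h.apply_ee_of_ne h.ne,
      h.apply_self, mul_neg (ee K n a) p, add_neg_cancel_right]
  apply_gg := by
    rw [σ.symm_apply_eq, map_sub, map_mul, map_neg, h.apply_gg, h.apply_gg_of_ne h.ne.symm,
      h.apply_self, neg_mul p (gg K n b), sub_neg_eq_add, sub_add_cancel]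

theorem twistRep_symm_apply_apply (h : IsElementaryTwist a b p σ) (z y : LRose K n) :
    twistRep σ.symm (σ z) y = σ (twistRep σ.symm z (σ.symm y)) := by
  have hconj : (twistRep σ.symm).comp σ.toAlgHom =
      (σ.toLinearEquiv.conjAlgEquiv K).toAlgHom.comp (twistRep σ.symm) := by
    refine algHom_ext (fun i => LinearMap.ext fun y => ?_) (fun j => LinearMap.ext fun y => ?_)
    · by_cases hi : i = b
      · subst hi
        simp [h.apply_ee, h.twistRep_symm_self_apply, h.symm_apply_self, add_mul, mul_assoc]
      · simp [h.apply_ee_of_ne hi]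
    · by_cases hj : j = a
      · subst hj
        simp [h.apply_gg, h.twistRep_symm_self_apply, h.apply_self, sub_mul, mul_assoc]
      · simp [h.apply_gg_of_ne hj]
  exact LinearMap.congr_fun (AlgHom.congr_fun hconj z) y

theorem twistRep_symm_symm_apply (h : IsElementaryTwist a b p σ) (z y : LRose K n) :
    twistRep σ.symm (σ.symm z) y = σ.symm (twistRep σ.symm z (σ y)) := by
  have := h.twistRep_symm_apply_apply (σ.symm z) (σ y)
  rw [AlgEquiv.apply_symm_apply, AlgEquiv.symm_apply_apply] at this
  rw [this, AlgEquiv.symm_apply_apply]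

theorem twistMap_symm_twistRep (h : IsElementaryTwist a b p σ) (x y : LRose K n) :
    twistMap σ.symm (twistRep σ x y) = x * twistMap σ.symm y := by
  induction x using LRose.induction generalizing y with
  | algebraMap r => simp [Algebra.algebraMap_eq_smul_one]
  | ee i => simp [twistMap_apply, h.twistRep_symm_apply_apply]
  | gg j => simp [twistMap_apply, h.twistRep_symm_symm_apply]
  | add x x' hx hx' => simp [add_mul, hx, hx']
  | mul x x' hx hx' => simp [mul_assoc, hx, hx']

theorem leftInverse_twistMap (h : IsElementaryTwist a b p σ) :
    Function.LeftInverse (twistMap σ.symm) (twistMap σ) := fun x => by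
  simpa [twistMap_apply] using h.twistMap_symm_twistRep x 1

theorem bijective_twistMap (h : IsElementaryTwist a b p σ) : Function.Bijective (twistMap σ) :=
  ⟨h.leftInverse_twistMap.injective, by simpa using h.symm.leftInverse_twistMap.surjective⟩

end IsElementaryTwist

end LRose

/-- For every `p ∈ A_{R_n}(e_1, e_2) ∩ L_K(R_n)_0`, the homomorphism
`θ_p : L_K(R_n) → L_K(R_n)^{φ_{U_p}}` determined by `θ_p(1) = 1`, `θ_p(e_i) = e_i`,
`θ_p(e_j*) = e_j*` for `j ≥ 2` and `θ_p(e_1*) = e_1* + p e_2*` is an isomorphism. -/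
theorem stmt16 (K : Type) [Field K] (n : ℕ) (hn : 2 ≤ n)
    (p : LRose K n) (hpA : p ∈ roseA K n) (hp0 : p ∈ rComponent K n 0)
    (φ φ' : LRose K n →ₐ[K] LRose K n)
    (hφe : ∀ i : Fin n, (i : ℕ) ≠ 1 → φ (ee K n i) = ee K n i)
    (hφg : ∀ j : Fin n, (j : ℕ) ≠ 0 → φ (gg K n j) = gg K n j)
    (hφe2 : φ (ee K n ⟨1, by omega⟩) = ee K n ⟨1, by omega⟩ + ee K n ⟨0, by omega⟩ * p)
    (hφg1 : φ (gg K n ⟨0, by omega⟩) = gg K n ⟨0, by omega⟩ - p * gg K n ⟨1, by omega⟩)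
    (hinv : ∀ x, φ (φ' x) = x ∧ φ' (φ x) = x)
    (θ : LRose K n →ₗ[K] LRose K n)
    (hone : θ 1 = 1)
    (hmulPos : ∀ m : ℕ, ∀ a ∈ rComponent K n (m : ℤ), ∀ b,
      θ (a * b) = θ a * (⇑φ)^[m] (θ b))
    (hmulNeg : ∀ m : ℕ, ∀ a ∈ rComponent K n (-(m : ℤ)), ∀ b,
      θ (a * b) = θ a * (⇑φ')^[m] (θ b))
    (hθe : ∀ i, θ (ee K n i) = ee K n i)
    (hθg : ∀ j : Fin n, (j : ℕ) ≠ 0 → θ (gg K n j) = gg K n j)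
    (hθg1 : θ (gg K n ⟨0, by omega⟩) =
      gg K n ⟨0, by omega⟩ + p * gg K n ⟨1, by omega⟩) :
    Function.Bijective ⇑θ := by
  set a : Fin n := ⟨0, by omega⟩
  set b : Fin n := ⟨1, by omega⟩
  let σ : LRose K n ≃ₐ[K] LRose K n :=
    AlgEquiv.ofAlgHom φ φ' (AlgHom.ext fun x => (hinv x).1) (AlgHom.ext fun x => (hinv x).2)
  have hσ : LRose.IsElementaryTwist a b p σ :=
    { ne := by simp [a, b]
      mem_zeroDegreeSpan := LRose.mem_zeroDegreeSpan
        (LRose.roseA_eq_adjoin (K := K) (a := a) (b := b) rfl rfl ▸ hpA) hp0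
      apply_letter := by
        rintro (i | j) hx
        · exact hφe i (by simpa [LRose.fixedLetters, b, Fin.ext_iff] using hx)
        · exact hφg j (by simpa [LRose.fixedLetters, a, Fin.ext_iff] using hx)
      apply_ee := hφe2
      apply_gg := hφg1 }
  have hθ_gg (j : Fin n) : θ (gg K n j) = σ.symm (gg K n j) := by
    by_cases hj : j = a
    · rw [hj, hθg1, hσ.symm.apply_gg, neg_mul p, sub_neg_eq_add]
    · rw [hθg j (by simpa [a, Fin.ext_iff] using hj), hσ.symm.apply_gg_of_ne hj]
  have hθ : θ = LRose.twistMap σ := LinearMap.ext <| LRose.eq_twistMap σ hone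
    (fun i c => by
      rw [hmulPos 1 _ (by simpa using LRose.ee_mem_rComponent i) c, hθe, Function.iterate_one]
      rfl)
    (fun j c => by
      rw [hmulNeg 1 _ (by simpa using LRose.gg_mem_rComponent j) c, hθ_gg, map_mul]
      rfl)
  exact hθ ▸ hσ.bijective_twistMap
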